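/- Axiom (1) of classical logic holds in base-extension semantics for S5: for all formulas φ, ψ, φ ⊩ ψ→φ, i.e., at every base ℬ and set of S5-modal relations 𝔯_A, for every superset base 𝒞 of ℬ at which φ is valid, ψ→φ is valid at 𝒞. -/

import Mathlib

/-- A base rule: a finite set of premiss atoms and a conclusion atom. -/
abbrev Rule := Finset ℕ × ℕ

/-- A base is a collection of base rules. -/
abbrev Base := Set Rule

/-- Derivability of an atom in a base: closure of ∅ under the rules. -/
inductive Deriv (B : Base) : ℕ → Prop where
  | step (L : Finset ℕ) (p : ℕ) (mem : (L, p) ∈ B)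
      (prem : ∀ q ∈ L, Deriv B q) : Deriv B p

/-- A base is inconsistent iff every atom is derivable in it. -/
def Inconsistent (B : Base) : Prop := ∀ p : ℕ, Deriv B p

/-- Formulae of the multi-agent modal language over agents `A`. -/
inductive Form (A : Type) where
  | atom : ℕ → Form A
  | bot  : Form A
  | imp  : Form A → Form A → Form A
  | K    : A → Form A → Form A

/-- Negation abbreviation ¬φ := φ → ⊥. -/
def Form.neg {A : Type} (φ : Form A) : Form A := Form.imp φ Form.bot

/-- Validity at a base given a family of relations on bases. -/
def Valid {A : Type} (R : A → Base → Base → Prop) : Base → Form A → Prop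
  | B, .atom p => Deriv B p
  | B, .bot => ∀ p : ℕ, Deriv B p
  | B, .imp φ ψ => ∀ C : Base, B ⊆ C → Valid R C φ → Valid R C ψ
  | B, .K a φ => ∀ C : Base, R a B C → Valid R C φ

/-- Validity of φ at ℬ from a (nonempty) set of assumptions Γ. -/
def GammaValid {A : Type} (R : A → Base → Base → Prop)
    (Γ : Set (Form A)) (B : Base) (φ : Form A) : Prop :=
  ∀ C : Base, B ⊆ C → (∀ ψ ∈ Γ, Valid R C ψ) → Valid R C φ

def Euclidean {X : Sort*} (r : X → X → Prop) : Prop :=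
  ∀ x y z, r x y → r x z → r y z

/-- S5-modal relations on bases. -/
structure S5Rel (r : Base → Base → Prop) : Prop where
  incon_succ : ∀ B, Inconsistent B →
    (∃ C, r B C ∧ Inconsistent C) ∧ ∀ D, r B D → Inconsistent D
  con_succ : ∀ B, ¬ Inconsistent B → ∀ C, r B C → ¬ Inconsistent C
  zig : ∀ B C, r B C → ∀ D, B ⊆ D → ¬ Inconsistent D → ∃ E, C ⊆ E ∧ r D E
  zag : ∀ B C, r B C → ¬ Inconsistent C → ∀ D, D ⊆ B → ∃ E, E ⊆ C ∧ r D E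
  refl : ∀ B, r B B
  trans : ∀ B C D, r B C → r C D → r B D
  eucl : ∀ B C D, r B C → r B D → r C D

/-- Maximally-consistent bases. -/
def MaxCon (B : Base) : Prop :=
  ¬ Inconsistent B ∧ ∀ δ : Rule, δ ∈ B ∨ Inconsistent (insert δ B)

/-- A formula is valid iff it is valid at every base for every family of S5-modal relations. -/
def ValidAll {A : Type} (φ : Form A) : Prop :=
  ∀ R : A → Base → Base → Prop, (∀ a, S5Rel (R a)) → ∀ B : Base, Valid R B φ


theorem Deriv.mono {B C : Base} (h : B ⊆ C) {p : ℕ} (hd : Deriv B p) : Deriv C p := by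
  induction hd with
  | step L p mem _ ih => exact Deriv.step L p (h mem) ih

theorem Inconsistent.mono {B C : Base} (h : B ⊆ C) (hB : Inconsistent B) : Inconsistent C :=
  fun p => (hB p).mono h

section

variable {A : Type} {R : A → Base → Base → Prop}

theorem Valid.of_inconsistent (hR : ∀ a, S5Rel (R a)) (φ : Form A) :
    ∀ {B : Base}, Inconsistent B → Valid R B φ := by
  induction φ with
  | atom p => exact fun hB => hB p
  | bot => exact fun hB => hB
  | imp _ _ _ ihψ => exact fun hB C hBC _ => ihψ (hB.mono hBC)
  | K a _ ih => exact fun hB C hBC => ih (((hR a).incon_succ _ hB).2 C hBC)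

theorem Valid.mono (hR : ∀ a, S5Rel (R a)) {φ : Form A} :
    ∀ {B C : Base}, B ⊆ C → Valid R B φ → Valid R C φ := by
  induction φ with
  | atom _ => exact fun h hd => Deriv.mono h hd
  | bot => exact fun h hd p => (hd p).mono h
  | imp _ _ _ _ => exact fun h hv D hCD hφ => hv D (h.trans hCD) hφ
  | K a _ ih =>
    intro B C h hv E hCE
    by_cases hC : Inconsistent C
    · exact .of_inconsistent hR _ (((hR a).incon_succ C hC).2 E hCE)
    · -- zag pulls the successor `E` of `C` back to a successor of the smaller base `B`
      obtain ⟨E', hE'E, hBE'⟩ := (hR a).zag C E hCE ((hR a).con_succ C hC E hCE) B h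
      exact ih hE'E (hv E' hBE')

end

/-- Axiom (1): φ ⊩ ψ → φ. -/
theorem stmt9 {A : Type} (φ ψ : Form A) (R : A → Base → Base → Prop)
    (hR : ∀ a, S5Rel (R a)) (B : Base) :
    GammaValid R {φ} B (ψ.imp φ) :=
  fun _ _ hΓ _ hCD _ => (hΓ φ rfl).mono hR hCD
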